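/- arXiv:2208.13696 — 2 statements merged into one kernel-verified Lean document; each statement's English description precedes it below -/
import Mathlib

section
/- For any finite multiset of jobs with nonnegative sizes and any number m ≥ 1 of identical machines (zero initial loads), the free time of the list schedule that processes the jobs in nondecreasing order of size is at most 4 times the optimal free time of the multiset. -/
/-- The machine of minimum load, ties broken by lowest machine index. -/
noncomputable def bestMachine {m : ℕ} (hm : 0 < m) (ℓ : Fin m → ℝ) : Fin m :=
  (Finset.univ.filter fun i => ∀ j, ℓ i ≤ ℓ j).min' (by
    obtain ⟨i, -, hi⟩ := Finset.exists_min_image Finset.univ ℓ ⟨⟨0, hm⟩, Finset.mem_univ _⟩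
    exact ⟨i, Finset.mem_filter.mpr ⟨Finset.mem_univ _, fun j => hi j (Finset.mem_univ _)⟩⟩)

/-- One step of list scheduling: assign a job of size `s` to the best machine. -/
noncomputable def schedStep {m : ℕ} (hm : 0 < m) (ℓ : Fin m → ℝ) (s : ℝ) : Fin m → ℝ :=
  Function.update ℓ (bestMachine hm ℓ) (ℓ (bestMachine hm ℓ) + s)

/-- Machine loads after list-scheduling `jobs` starting from initial loads `ℓ`. -/
noncomputable def loadsAfter {m : ℕ} (hm : 0 < m) (ℓ : Fin m → ℝ) : List ℝ → (Fin m → ℝ)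
  | [] => ℓ
  | s :: rest => loadsAfter hm (schedStep hm ℓ s) rest

/-- The free time: minimum machine load after all jobs are assigned. -/
noncomputable def freeTime {m : ℕ} (hm : 0 < m) (ℓ : Fin m → ℝ) (jobs : List ℝ) : ℝ :=
  Finset.univ.inf' ⟨⟨0, hm⟩, Finset.mem_univ _⟩ (loadsAfter hm ℓ jobs)

/-- Total completion time of the list schedule. -/
noncomputable def totalCompletion {m : ℕ} (hm : 0 < m) (ℓ : Fin m → ℝ) : List ℝ → ℝ
  | [] => 0
  | s :: rest => (ℓ (bestMachine hm ℓ) + s) + totalCompletion hm (schedStep hm ℓ s) rest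

/-- The sequence of machines to which successive jobs are assigned. -/
noncomputable def assignSeq {m : ℕ} (hm : 0 < m) (ℓ : Fin m → ℝ) : List ℝ → List (Fin m)
  | [] => []
  | s :: rest => bestMachine hm ℓ :: assignSeq hm (schedStep hm ℓ s) rest

/-- The optimal free time of a multiset of jobs: min over orderings, zero initial loads. -/
noncomputable def optFreeTime {m : ℕ} (hm : 0 < m) (J : Multiset ℝ) : ℝ :=
  sInf {F | ∃ l : List ℝ, (l : Multiset ℝ) = J ∧ F = freeTime hm (fun _ => 0) l}

/-- The optimal total completion time of a multiset of jobs: min over orderings. -/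
noncomputable def optTotalCompletion {m : ℕ} (hm : 0 < m) (J : Multiset ℝ) : ℝ :=
  sInf {C | ∃ l : List ℝ, (l : Multiset ℝ) = J ∧ C = totalCompletion hm (fun _ => 0) l}
section FT
variable {m : ℕ} (hm : 0 < m)

noncomputable def minL (ℓ : Fin m → ℝ) : ℝ :=
  Finset.univ.inf' ⟨⟨0, hm⟩, Finset.mem_univ _⟩ ℓ

lemma minL_le (ℓ : Fin m → ℝ) (i : Fin m) : minL hm ℓ ≤ ℓ i :=
  Finset.inf'_le _ (Finset.mem_univ i)

lemma le_minL {c : ℝ} {ℓ : Fin m → ℝ} (h : ∀ i, c ≤ ℓ i) : c ≤ minL hm ℓ :=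
  Finset.le_inf' _ _ (fun i _ => h i)

lemma minL_const (c : ℝ) : minL hm (fun _ => c) = c := Finset.inf'_const _ c

lemma freeTime_def (ℓ : Fin m → ℝ) (js : List ℝ) :
    freeTime hm ℓ js = minL hm (loadsAfter hm ℓ js) := rfl

lemma best_le (ℓ : Fin m → ℝ) (j : Fin m) : ℓ (bestMachine hm ℓ) ≤ ℓ j := by
  have h : bestMachine hm ℓ ∈ Finset.univ.filter (fun i => ∀ j, ℓ i ≤ ℓ j) :=
    Finset.min'_mem _ _
  exact (Finset.mem_filter.mp h).2 j

lemma best_eq_min (ℓ : Fin m → ℝ) : ℓ (bestMachine hm ℓ) = minL hm ℓ :=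
  le_antisymm (le_minL hm (best_le hm ℓ)) (minL_le hm ℓ _)

lemma schedStep_best (ℓ : Fin m → ℝ) (s : ℝ) :
    schedStep hm ℓ s (bestMachine hm ℓ) = ℓ (bestMachine hm ℓ) + s := by
  simp [schedStep]

lemma schedStep_ne (ℓ : Fin m → ℝ) (s : ℝ) {i : Fin m} (h : i ≠ bestMachine hm ℓ) :
    schedStep hm ℓ s i = ℓ i := by
  simp [schedStep, Function.update_of_ne h]

lemma minL_le_schedStep (ℓ : Fin m → ℝ) {s : ℝ} (hs : 0 ≤ s) :
    minL hm ℓ ≤ minL hm (schedStep hm ℓ s) := by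
  apply le_minL
  intro i
  by_cases hi : i = bestMachine hm ℓ
  · subst hi; rw [schedStep_best]
    have := minL_le hm ℓ (bestMachine hm ℓ); linarith
  · rw [schedStep_ne hm ℓ s hi]; exact minL_le hm ℓ i

lemma minL_le_freeTime : ∀ (js : List ℝ) (ℓ : Fin m → ℝ), (∀ x ∈ js, 0 ≤ x) →
    minL hm ℓ ≤ freeTime hm ℓ js
  | [], ℓ, _ => le_of_eq rfl
  | s :: rest, ℓ, h => by
    have h1 := minL_le_schedStep hm ℓ (h s (by simp))
    have h2 := minL_le_freeTime rest (schedStep hm ℓ s) (fun x hx => h x (by simp [hx]))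
    calc minL hm ℓ ≤ _ := h1
      _ ≤ _ := h2

lemma schedStep_nonneg (ℓ : Fin m → ℝ) {s : ℝ} (hs : 0 ≤ s) (h : ∀ i, 0 ≤ ℓ i) :
    ∀ i, 0 ≤ schedStep hm ℓ s i := by
  intro i
  by_cases hi : i = bestMachine hm ℓ
  · subst hi; rw [schedStep_best]; have := h (bestMachine hm ℓ); linarith
  · rw [schedStep_ne hm ℓ s hi]; exact h i

lemma sum_schedStep (ℓ : Fin m → ℝ) (s : ℝ) :
    ∑ i, schedStep hm ℓ s i = (∑ i, ℓ i) + s := by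
  unfold schedStep
  rw [Finset.sum_update_of_mem (Finset.mem_univ _)]
  rw [← Finset.add_sum_erase _ ℓ (Finset.mem_univ (bestMachine hm ℓ))]
  rw [Finset.sdiff_singleton_eq_erase]
  ring

lemma sum_loadsAfter : ∀ (js : List ℝ) (ℓ : Fin m → ℝ),
    ∑ i, loadsAfter hm ℓ js i = (∑ i, ℓ i) + js.sum
  | [], ℓ => by simp [loadsAfter]
  | s :: rest, ℓ => by
    show ∑ i, loadsAfter hm (schedStep hm ℓ s) rest i = _
    rw [sum_loadsAfter rest, sum_schedStep]
    simp; ring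

lemma loadsAfter_append : ∀ (a b : List ℝ) (ℓ : Fin m → ℝ),
    loadsAfter hm ℓ (a ++ b) = loadsAfter hm (loadsAfter hm ℓ a) b
  | [], b, ℓ => rfl
  | s :: rest, b, ℓ => loadsAfter_append rest b (schedStep hm ℓ s)


/-- If at least `r.length + 1` machines have load ≤ X, the final min is ≤ X. -/
lemma freeTime_le_of_count (X : ℝ) : ∀ (r : List ℝ) (ℓ : Fin m → ℝ),
    r.length + 1 ≤ (Finset.univ.filter fun i => ℓ i ≤ X).card →
    freeTime hm ℓ r ≤ X
  | [], ℓ, h => by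
    obtain ⟨i, hi⟩ := Finset.card_pos.mp
      (lt_of_lt_of_le (Nat.succ_pos _) h)
    rw [Finset.mem_filter] at hi
    exact le_trans (minL_le hm ℓ i) hi.2
  | s :: rest, ℓ, h => by
    show freeTime hm (schedStep hm ℓ s) rest ≤ X
    apply freeTime_le_of_count X rest
    have hsub : (Finset.univ.filter fun i => ℓ i ≤ X).erase (bestMachine hm ℓ) ⊆
        Finset.univ.filter fun i => schedStep hm ℓ s i ≤ X := by
      intro i hi
      rw [Finset.mem_erase, Finset.mem_filter] at hi
      rw [Finset.mem_filter]
      exact ⟨Finset.mem_univ _, by rw [schedStep_ne hm ℓ s hi.1]; exact hi.2.2⟩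
    have h1 := Finset.card_le_card hsub
    have h2 := Finset.pred_card_le_card_erase
      (s := Finset.univ.filter fun i => ℓ i ≤ X) (a := bestMachine hm ℓ)
    simp only [List.length_cons] at h
    omega

/-- Balance invariant: if all jobs are in [0,c] and loads within c of min, stays so. -/
lemma loadsAfter_le_min_add (c : ℝ) : ∀ (js : List ℝ) (ℓ : Fin m → ℝ),
    (∀ x ∈ js, 0 ≤ x ∧ x ≤ c) → (∀ i, ℓ i ≤ minL hm ℓ + c) →
    ∀ i, loadsAfter hm ℓ js i ≤ minL hm (loadsAfter hm ℓ js) + c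
  | [], ℓ, _, h => h
  | s :: rest, ℓ, hj, h => by
    show ∀ i, loadsAfter hm (schedStep hm ℓ s) rest i ≤ _ + c
    apply loadsAfter_le_min_add c rest _ (fun x hx => hj x (by simp [hx]))
    have hs := hj s (by simp)
    have hmono := minL_le_schedStep hm ℓ hs.1
    intro i
    by_cases hi : i = bestMachine hm ℓ
    · subst hi; rw [schedStep_best, best_eq_min hm ℓ]; linarith
    · rw [schedStep_ne hm ℓ s hi]
      have := h i; linarith


/-- Lower bound: if counting machines ≥ c plus remaining jobs ≥ c is at least m,
the final min is ≥ c. -/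
lemma le_freeTime_of_many (c : ℝ) (hc : 0 ≤ c) : ∀ (r : List ℝ) (ℓ : Fin m → ℝ),
    (∀ x ∈ r, 0 ≤ x) → (∀ i, 0 ≤ ℓ i) →
    ((∀ i, c ≤ ℓ i) ∨
      m ≤ (Finset.univ.filter fun i => c ≤ ℓ i).card + r.countP (fun s => decide (c ≤ s))) →
    c ≤ freeTime hm ℓ r
  | [], ℓ, _, _, h => by
    rcases h with h | h
    · exact le_minL hm h
    · apply le_minL hm
      have : (Finset.univ.filter fun i => c ≤ ℓ i) = Finset.univ := by
        apply Finset.eq_univ_of_card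
        have h1 := Finset.card_le_card
          (Finset.filter_subset (fun i => c ≤ ℓ i) (Finset.univ : Finset (Fin m)))
        simp only [List.countP_nil] at h
        simp only [Finset.card_univ, Fintype.card_fin] at h1 ⊢
        omega
      intro i
      have := Finset.mem_filter.mp (this ▸ Finset.mem_univ i)
      exact this.2
  | s :: rest, ℓ, hr, hnn, h => by
    have hs : 0 ≤ s := hr s (by simp)
    have hrest : ∀ x ∈ rest, 0 ≤ x := fun x hx => hr x (by simp [hx])
    have hnn' := schedStep_nonneg hm ℓ hs hnn
    show c ≤ freeTime hm (schedStep hm ℓ s) rest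
    apply le_freeTime_of_many c hc rest _ hrest hnn'
    rcases h with h | h
    · left
      intro i
      by_cases hi : i = bestMachine hm ℓ
      · subst hi; rw [schedStep_best]; have := h (bestMachine hm ℓ); linarith
      · rw [schedStep_ne hm ℓ s hi]; exact h i
    · by_cases hall : ∀ i, c ≤ ℓ i
      · left
        intro i
        by_cases hi : i = bestMachine hm ℓ
        · subst hi; rw [schedStep_best]; have := hall (bestMachine hm ℓ); linarith
        · rw [schedStep_ne hm ℓ s hi]; exact hall i
      · right
        push_neg at hall
        obtain ⟨i₀, hi₀⟩ := hall
        have hbest : ℓ (bestMachine hm ℓ) < c :=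
          lt_of_le_of_lt (best_le hm ℓ i₀) hi₀
        have hbn : bestMachine hm ℓ ∉ Finset.univ.filter fun i => c ≤ ℓ i := by
          simp [not_le.mpr hbest]
        have hsub : (Finset.univ.filter fun i => c ≤ ℓ i) ⊆
            Finset.univ.filter fun i => c ≤ schedStep hm ℓ s i := by
          intro i hi
          have hib : i ≠ bestMachine hm ℓ := fun he => hbn (he ▸ hi)
          rw [Finset.mem_filter] at hi ⊢
          exact ⟨Finset.mem_univ _, by rw [schedStep_ne hm ℓ s hib]; exact hi.2⟩
        rw [List.countP_cons] at h
        by_cases hcs : c ≤ s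
        · -- best machine joins the filter
          have hmem : bestMachine hm ℓ ∈
              Finset.univ.filter fun i => c ≤ schedStep hm ℓ s i := by
            rw [Finset.mem_filter, schedStep_best]
            have := hnn (bestMachine hm ℓ)
            exact ⟨Finset.mem_univ _, by linarith⟩
          have hsub2 : insert (bestMachine hm ℓ) (Finset.univ.filter fun i => c ≤ ℓ i) ⊆
              Finset.univ.filter fun i => c ≤ schedStep hm ℓ s i := by
            intro i hi
            rcases Finset.mem_insert.mp hi with hi | hi
            · exact hi ▸ hmem
            · exact hsub hi
          have hcard := Finset.card_le_card hsub2
          rw [Finset.card_insert_of_notMem hbn] at hcard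
          have : decide (c ≤ s) = true := by simpa using hcs
          rw [this] at h
          simp at h ⊢
          omega
        · have hcard := Finset.card_le_card hsub
          have : decide (c ≤ s) = false := by simpa using hcs
          rw [this] at h
          simp at h ⊢
          omega


lemma map_update_le (g : Fin m → ℝ) (b : Fin m) (s : ℝ) :
    Multiset.map (Function.update g b s) Finset.univ.val ≤
      s ::ₘ Multiset.map g Finset.univ.val := by
  have hb : b ∈ (Finset.univ : Finset (Fin m)).val := Finset.mem_univ_val b
  have hcons : b ::ₘ (Finset.univ : Finset (Fin m)).val.erase b =
      (Finset.univ : Finset (Fin m)).val := Multiset.cons_erase hb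
  have hnd : ((Finset.univ : Finset (Fin m)).val.erase b).Nodup :=
    (Finset.univ : Finset (Fin m)).nodup.erase b
  have hnotmem : b ∉ (Finset.univ : Finset (Fin m)).val.erase b :=
    (Finset.univ : Finset (Fin m)).nodup.not_mem_erase
  calc Multiset.map (Function.update g b s) Finset.univ.val
      = Multiset.map (Function.update g b s) (b ::ₘ Finset.univ.val.erase b) := by rw [hcons]
    _ = s ::ₘ Multiset.map (Function.update g b s) (Finset.univ.val.erase b) := by
        rw [Multiset.map_cons, Function.update_self]
    _ = s ::ₘ Multiset.map g (Finset.univ.val.erase b) := by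
        congr 1
        apply Multiset.map_congr rfl
        intro x hx
        have hxb : x ≠ b := fun he => hnotmem (he ▸ hx)
        exact Function.update_of_ne hxb _ _
    _ ≤ s ::ₘ Multiset.map g Finset.univ.val := by
        exact Multiset.cons_le_cons s (Multiset.map_le_map (Multiset.erase_le b _))

/-- Each final load exceeds the final minimum by at most one job (distinct per machine). -/
lemma exists_lastjob : ∀ (r : List ℝ) (ℓ g : Fin m → ℝ), (∀ x ∈ r, 0 ≤ x) →
    (∀ i, ℓ i ≤ minL hm ℓ + g i) →
    ∃ g' : Fin m → ℝ,
      (∀ i, loadsAfter hm ℓ r i ≤ minL hm (loadsAfter hm ℓ r) + g' i) ∧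
      Multiset.map g' Finset.univ.val ≤ Multiset.map g Finset.univ.val + (r : Multiset ℝ)
  | [], ℓ, g, _, h => ⟨g, h, by simp⟩
  | s :: rest, ℓ, g, hr, h => by
    have hs : 0 ≤ s := hr s (by simp)
    have hmono := minL_le_schedStep hm ℓ hs
    set b := bestMachine hm ℓ with hbdef
    have hstep : ∀ i, schedStep hm ℓ s i ≤ minL hm (schedStep hm ℓ s) +
        Function.update g b s i := by
      intro i
      by_cases hi : i = b
      · subst hi
        rw [show schedStep hm ℓ s b = ℓ b + s from schedStep_best hm ℓ s,
          Function.update_self, best_eq_min hm ℓ]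
        linarith
      · rw [schedStep_ne hm ℓ s hi, Function.update_of_ne hi]
        have := h i; linarith
    obtain ⟨g', hg1, hg2⟩ := exists_lastjob rest (schedStep hm ℓ s)
      (Function.update g b s) (fun x hx => hr x (by simp [hx])) hstep
    refine ⟨g', hg1, ?_⟩
    calc Multiset.map g' Finset.univ.val
        ≤ Multiset.map (Function.update g b s) Finset.univ.val + (rest : Multiset ℝ) := hg2
      _ ≤ (s ::ₘ Multiset.map g Finset.univ.val) + (rest : Multiset ℝ) := by
          exact add_le_add (map_update_le g b s) le_rfl
      _ = Multiset.map g Finset.univ.val + ((s :: rest : List ℝ) : Multiset ℝ) := by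
          rw [← Multiset.cons_coe, Multiset.add_cons, Multiset.cons_add]


/-- Any submultiset of a sorted list has sum at most the sum of the top-|M| suffix. -/
lemma sum_le_topk : ∀ (l : List ℝ), l.Pairwise (· ≤ ·) → ∀ M : Multiset ℝ,
    M ≤ (l : Multiset ℝ) → M.sum ≤ (l.drop (l.length - Multiset.card M)).sum
  | [], _, M, hM => by
    have : M = 0 := Multiset.le_zero.mp (by simpa using hM)
    simp [this]
  | a :: t, hsort, M, hM => by
    have hsort' : t.Pairwise (· ≤ ·) := hsort.of_cons
    have hcardle : Multiset.card M ≤ t.length + 1 := by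
      have := Multiset.card_le_card hM; simpa using this
    by_cases ha : a ∈ M
    · have h2 : M.erase a ≤ (t : Multiset ℝ) := by
        have := Multiset.erase_le_erase a hM
        simpa [Multiset.erase_cons_head] using this
      have ih := sum_le_topk t hsort' (M.erase a) h2
      have hce : Multiset.card (M.erase a) = Multiset.card M - 1 :=
        Multiset.card_erase_of_mem ha
      have hcpos : 0 < Multiset.card M := Multiset.card_pos_iff_exists_mem.mpr ⟨a, ha⟩
      have hsumM : M.sum = a + (M.erase a).sum := by
        conv_lhs => rw [← Multiset.cons_erase ha]
        rw [Multiset.sum_cons]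
      by_cases hj : Multiset.card M ≤ t.length
      · have hlen : (a :: t).length - Multiset.card M =
            (t.length - Multiset.card M) + 1 := by simp; omega
        have hidx : t.length - Multiset.card M < t.length := by omega
        have hdrop2 : t.drop (t.length - Multiset.card M) =
            t[t.length - Multiset.card M] :: t.drop (t.length - Multiset.card M + 1) :=
          List.drop_eq_getElem_cons hidx
        have hne2 : t.length - (Multiset.card M - 1) =
            t.length - Multiset.card M + 1 := by omega
        have hale : a ≤ t[t.length - Multiset.card M] :=
          List.rel_of_pairwise_cons hsort (List.getElem_mem hidx)
        rw [hlen, List.drop_succ_cons, hdrop2, List.sum_cons, hsumM]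
        rw [hce, hne2] at ih
        linarith
      · have hj' : Multiset.card M = t.length + 1 := by omega
        have hMe : M = ((a :: t : List ℝ) : Multiset ℝ) := by
          apply Multiset.eq_of_le_of_card_le hM
          simp [hj']
        have hz : (a :: t).length - Multiset.card M = 0 := by simp [hj']
        rw [hz, List.drop_zero, hMe]
        simp
    · have h2 : M ≤ (t : Multiset ℝ) := by
        rw [Multiset.le_iff_count]
        intro x
        have hx2 := Multiset.le_iff_count.mp hM x
        by_cases hx : x = a
        · subst hx; simp [Multiset.count_eq_zero_of_notMem ha]
        · rw [Multiset.coe_count] at hx2 ⊢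
          simpa [List.count_cons, hx, Ne.symm hx] using hx2
      have ih := sum_le_topk t hsort' M h2
      have hc2 : Multiset.card M ≤ t.length := by
        have := Multiset.card_le_card h2; simpa using this
      have hlen : (a :: t).length - Multiset.card M =
          (t.length - Multiset.card M) + 1 := by simp; omega
      rw [hlen, List.drop_succ_cons]
      exact ih

end FT



/-- list scheduling jobs in nondecreasing order of size is a
4-approximation for the optimal free time. -/
theorem stmt1 (m : ℕ) (hm : 0 < m) (J : Multiset ℝ) (hJ : ∀ s ∈ J, 0 ≤ s)
    (l : List ℝ) (hl : (l : Multiset ℝ) = J) (hsorted : l.Pairwise (· ≤ ·)) :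
    freeTime hm (fun _ => 0) l ≤ 4 * optFreeTime hm J := by
  classical
  subst hl
  have hl0 : ∀ x ∈ l, 0 ≤ x := fun x hx => hJ x (by simpa using hx)
  set Sset : Set ℝ := {F | ∃ l' : List ℝ, (l' : Multiset ℝ) = (l : Multiset ℝ) ∧
    F = freeTime hm (fun _ => 0) l'} with hSdef
  have hopt : optFreeTime hm (l : Multiset ℝ) = sInf Sset := rfl
  have hne : Sset.Nonempty := ⟨freeTime hm (fun _ => 0) l, l, rfl, rfl⟩
  have hmem0 : ∀ (l' : List ℝ), (l' : Multiset ℝ) = (l : Multiset ℝ) → ∀ x ∈ l', 0 ≤ x := by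
    intro l' hl' x hx
    exact hl0 x ((Multiset.coe_eq_coe.mp hl').mem_iff.mp hx)
  have hBnn : ∀ B ∈ Sset, 0 ≤ B := by
    rintro B ⟨l', hl', rfl⟩
    have h0 := minL_le_freeTime hm l' (fun _ => 0) (hmem0 l' hl')
    rwa [minL_const] at h0
  have hInf0 : 0 ≤ sInf Sset := le_csInf hne hBnn
  rcases lt_or_ge l.length m with hnm | hnm
  · -- fewer jobs than machines: free time of the sorted schedule is ≤ 0
    have hA : freeTime hm (fun _ => 0) l ≤ 0 := by
      apply freeTime_le_of_count hm 0 l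
      simp only [Finset.filter_true, le_refl, Finset.card_univ, Fintype.card_fin]
      simpa using hnm
    rw [hopt]; linarith
  · -- main case
    set n := l.length with hn
    set k := n - m with hkdef
    have hk : k < n := by omega
    set c := l.get ⟨k, hk⟩ with hcdef
    have hcl : c ∈ l := List.get_mem l ⟨k, hk⟩
    have hc0 : 0 ≤ c := hl0 c hcl
    have hcdrop : c ∈ l.drop k := by
      rw [List.drop_eq_getElem_cons hk]
      exact List.mem_cons_self
    have htake : ∀ x ∈ l.take k, 0 ≤ x ∧ x ≤ c := fun x hx =>
      ⟨hl0 x (List.mem_of_mem_take hx),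
        hsorted.rel_of_mem_take_of_mem_drop hx hcdrop⟩
    have hdrop : ∀ x ∈ l.drop k, c ≤ x := by
      intro x hx
      obtain ⟨i, hi, rfl⟩ := List.getElem_of_mem hx
      rw [List.getElem_drop]
      have hki : k + i < l.length := by rw [List.length_drop] at hi; omega
      have hle : (⟨k, hk⟩ : Fin l.length) ≤ ⟨k + i, hki⟩ := by
        simp [Fin.mk_le_mk]
      have := hsorted.rel_get_of_le hle
      simpa [List.get_eq_getElem, hcdef] using this
    have hdlen : (l.drop k).length = m := by rw [List.length_drop]; omega
    -- the partial schedule of the small jobs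
    set ℓ₁ := loadsAfter hm (fun _ => 0) (l.take k) with hℓ₁
    set v := minL hm ℓ₁ with hv
    have h14 : ∀ i, ℓ₁ i ≤ v + c := by
      apply loadsAfter_le_min_add hm c (l.take k) _ htake
      intro i
      rw [minL_const]
      simpa using hc0
    have hsum1 : ∑ i, ℓ₁ i = (l.take k).sum := by
      rw [hℓ₁, sum_loadsAfter]; simp
    have hvavg : (m : ℝ) * v ≤ (l.take k).sum := by
      rw [← hsum1]
      calc (m : ℝ) * v = ∑ _i : Fin m, v := by
            simp [Finset.sum_const, nsmul_eq_mul]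
        _ ≤ ∑ i, ℓ₁ i := Finset.sum_le_sum (fun i _ => minL_le hm ℓ₁ i)
    -- identify the sorted-schedule free time
    have hsplit : freeTime hm (fun _ => 0) l =
        freeTime hm (schedStep hm ℓ₁ c) (l.drop (k + 1)) := by
      conv_lhs => rw [← List.take_append_drop k l]
      rw [freeTime_def, loadsAfter_append, ← hℓ₁, List.drop_eq_getElem_cons hk]
      rfl
    -- upper bound on the sorted-schedule free time
    have hA : freeTime hm (fun _ => 0) l ≤ v + c := by
      rw [hsplit]
      apply freeTime_le_of_count hm (v + c) _
      have hall : (Finset.univ.filter fun i => schedStep hm ℓ₁ c i ≤ v + c) =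
          Finset.univ := by
        apply Finset.eq_univ_of_forall
        intro i
        rw [Finset.mem_filter]
        refine ⟨Finset.mem_univ _, ?_⟩
        by_cases hi : i = bestMachine hm ℓ₁
        · subst hi
          rw [schedStep_best, best_eq_min hm ℓ₁]
        · rw [schedStep_ne hm ℓ₁ c hi]
          exact h14 i
      rw [hall]
      have : (l.drop (k+1)).length = m - 1 := by rw [List.length_drop]; omega
      rw [this]
      simp only [Finset.card_univ, Fintype.card_fin]
      omega
    -- lower bounds for every ordering
    have hlow : ∀ B ∈ Sset, v + c ≤ 2 * B := by
      rintro B ⟨l', hl', rfl⟩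
      set B := freeTime hm (fun _ => 0) l' with hB
      have hj' := hmem0 l' hl'
      -- (i) c ≤ B
      have hcB : c ≤ B := by
        apply le_freeTime_of_many hm c hc0 l' (fun _ => 0) hj' (fun i => le_refl 0)
        right
        have hcount : l'.countP (fun s => decide (c ≤ s)) ≥ m := by
          have hperm : l'.Perm l := Multiset.coe_eq_coe.mp hl'
          rw [hperm.countP_eq]
          have hcd : (l.drop k).countP (fun s => decide (c ≤ s)) = m := by
            rw [List.countP_eq_length.mpr (fun a ha => by simpa using hdrop a ha), hdlen]
          calc m = (l.drop k).countP (fun s => decide (c ≤ s)) := hcd.symm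
            _ ≤ l.countP (fun s => decide (c ≤ s)) := by
                conv_rhs => rw [← List.take_append_drop k l]
                rw [List.countP_append]
                omega
        omega
      -- (ii) (take k).sum ≤ m * B
      have hRB : (l.take k).sum ≤ (m : ℝ) * B := by
        obtain ⟨g', hg1, hg2⟩ := exists_lastjob hm l' (fun _ => 0) (fun _ => 0) hj'
          (fun i => by rw [minL_const]; simp)
        -- sum of final loads
        have hsumf : ∑ i, loadsAfter hm (fun _ => 0) l' i = l.sum := by
          rw [sum_loadsAfter]
          simp only [Finset.sum_const_zero, zero_add]
          have hperm : l'.Perm l := Multiset.coe_eq_coe.mp hl'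
          exact hperm.sum_eq
        -- bound the greatest jobs sum
        have hg2' : Multiset.map g' Finset.univ.val ≤
            ((List.replicate m (0:ℝ) ++ l : List ℝ) : Multiset ℝ) := by
          have hmap0 : Multiset.map (fun _ : Fin m => (0:ℝ)) Finset.univ.val =
              ((List.replicate m (0:ℝ) : List ℝ) : Multiset ℝ) := by
            simp [Multiset.map_const', Multiset.coe_replicate]
          calc Multiset.map g' Finset.univ.val
              ≤ Multiset.map (fun _ : Fin m => (0:ℝ)) Finset.univ.val + (l' : Multiset ℝ) :=
                hg2
            _ = ((List.replicate m (0:ℝ) : List ℝ) : Multiset ℝ) + (l : Multiset ℝ) := by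
                rw [hmap0, hl']
            _ = _ := by rw [← Multiset.coe_add]
        have hsorted0 : (List.replicate m (0:ℝ) ++ l).Pairwise (· ≤ ·) := by
          rw [List.pairwise_append]
          refine ⟨List.pairwise_replicate.mpr (Or.inr (le_refl (0:ℝ))), hsorted, ?_⟩
          intro x hx y hy
          rw [List.eq_of_mem_replicate hx]
          exact hl0 y hy
        have hcardg : Multiset.card (Multiset.map g' Finset.univ.val) = m := by simp
        have htop := sum_le_topk (List.replicate m (0:ℝ) ++ l) hsorted0 _ hg2'
        rw [hcardg] at htop
        have h5 : (List.replicate m (0:ℝ) ++ l).drop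
            ((List.replicate m (0:ℝ) ++ l).length - m) = l.drop k := by
          have hlen : (List.replicate m (0:ℝ) ++ l).length - m =
              (List.replicate m (0:ℝ)).length + k := by
            simp only [List.length_append, List.length_replicate]
            omega
          rw [hlen, List.drop_append]; simp
        rw [h5] at htop
        have hfb : ∀ i, loadsAfter hm (fun _ => 0) l' i ≤ B + g' i := hg1
        have hkey : l.sum ≤ (m : ℝ) * B + (l.drop k).sum := by
          rw [← hsumf]
          calc ∑ i, loadsAfter hm (fun _ => 0) l' i
              ≤ ∑ i, (B + g' i) := Finset.sum_le_sum (fun i _ => hfb i)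
            _ = (m : ℝ) * B + ∑ i, g' i := by
                rw [Finset.sum_add_distrib]
                simp [Finset.sum_const, nsmul_eq_mul]
            _ ≤ (m : ℝ) * B + (l.drop k).sum := by
                have hmg : ∑ i, g' i = (Multiset.map g' Finset.univ.val).sum := rfl
                rw [hmg]; linarith
        have hts : l.sum = (l.take k).sum + (l.drop k).sum := by
          conv_lhs => rw [← List.take_append_drop k l]
          rw [List.sum_append]
        linarith
      have hvB : v ≤ B := by
        have hmpos : (0:ℝ) < m := by exact_mod_cast hm
        nlinarith
      linarith
    have h2 : (v + c) / 2 ≤ sInf Sset := by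
      apply le_csInf hne
      intro B hB
      have := hlow B hB
      linarith
    rw [hopt]
    linarith
end

section
/- Fix a finite list of jobs with nonnegative sizes. For any integers 1 ≤ m' ≤ m, the free time of the list schedule of this list on m machines with zero initial loads is at most the free time of the list schedule of the same list on m' machines with zero initial loads. In other words, decreasing the number of machines weakly increases the free time of a list schedule. -/
lemma bestMachine_le {m : ℕ} (hm : 0 < m) (ℓ : Fin m → ℝ) (j : Fin m) :
    ℓ (bestMachine hm ℓ) ≤ ℓ j := by
  have h : bestMachine hm ℓ ∈ Finset.univ.filter fun i => ∀ j, ℓ i ≤ ℓ j :=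
    Finset.min'_mem _ _
  rw [Finset.mem_filter] at h
  exact h.2 j

/-- The counting invariant comparing two load vectors. -/
def SchedInv {m m' : ℕ} (ℓ : Fin m → ℝ) (ℓ' : Fin m' → ℝ) : Prop :=
  ∀ t : ℝ, (Finset.univ.filter fun j => ℓ' j ≤ t).card ≤
    (Finset.univ.filter fun i => ℓ i ≤ t).card

lemma schedInv_min_le {m m' : ℕ} (hm : 0 < m) (hm' : 0 < m')
    (ℓ : Fin m → ℝ) (ℓ' : Fin m' → ℝ) (h : SchedInv ℓ ℓ') :
    ℓ (bestMachine hm ℓ) ≤ ℓ' (bestMachine hm' ℓ') := by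
  set j0 := bestMachine hm' ℓ'
  have h1 : 0 < (Finset.univ.filter fun j => ℓ' j ≤ ℓ' j0).card :=
    Finset.card_pos.mpr ⟨j0, by simp⟩
  obtain ⟨i, hi⟩ := Finset.card_pos.mp (lt_of_lt_of_le h1 (h (ℓ' j0)))
  rw [Finset.mem_filter] at hi
  exact le_trans (bestMachine_le hm ℓ i) hi.2

lemma card_filter_split {n : ℕ} (p : Fin n → Prop) [DecidablePred p] (i0 : Fin n) :
    (Finset.univ.filter p).card =
      ((Finset.univ \ {i0}).filter p).card + (if p i0 then 1 else 0) := by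
  rw [Finset.card_filter, Finset.card_filter,
    Finset.sum_eq_sum_sdiff_singleton_add (Finset.mem_univ i0)]

lemma card_filter_update {n : ℕ} (f : Fin n → ℝ) (i0 : Fin n) (v t : ℝ) :
    (Finset.univ.filter fun i => Function.update f i0 v i ≤ t).card =
      ((Finset.univ \ {i0}).filter fun i => f i ≤ t).card +
        (if v ≤ t then 1 else 0) := by
  rw [card_filter_split (fun i => Function.update f i0 v i ≤ t) i0]
  congr 1
  · congr 1
    apply Finset.filter_congr
    intro x hx
    rw [Finset.mem_sdiff, Finset.mem_singleton] at hx
    simp [Function.update_of_ne hx.2]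
  · simp

lemma schedInv_step {m m' : ℕ} (hm : 0 < m) (hm' : 0 < m')
    (ℓ : Fin m → ℝ) (ℓ' : Fin m' → ℝ) (s : ℝ) (hs : 0 ≤ s) (h : SchedInv ℓ ℓ') :
    SchedInv (schedStep hm ℓ s) (schedStep hm' ℓ' s) := by
  intro t
  have hmin : ℓ (bestMachine hm ℓ) ≤ ℓ' (bestMachine hm' ℓ') :=
    schedInv_min_le hm hm' ℓ ℓ' h
  set i0 := bestMachine hm ℓ with hi0def
  set j0 := bestMachine hm' ℓ' with hj0def
  simp only [schedStep, ← hi0def, ← hj0def]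
  rw [card_filter_update, card_filter_update]
  have hinv := h t
  rw [card_filter_split (fun j => ℓ' j ≤ t) j0, card_filter_split (fun i => ℓ i ≤ t) i0]
    at hinv
  set A := ((Finset.univ \ {i0}).filter fun i => ℓ i ≤ t).card with hA
  set B := ((Finset.univ \ {j0}).filter fun j => ℓ' j ≤ t).card with hB
  by_cases h1 : ℓ' j0 + s ≤ t
  · have h2 : ℓ i0 + s ≤ t := by linarith
    have h3 : ℓ' j0 ≤ t := by linarith
    have h4 : ℓ i0 ≤ t := by linarith
    rw [if_pos h1, if_pos h2]
    rw [if_pos h3, if_pos h4] at hinv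
    omega
  · rw [if_neg h1]
    by_cases h3 : ℓ' j0 ≤ t
    · rw [if_pos h3] at hinv
      split_ifs at hinv with h4
      · split_ifs <;> omega
      · split_ifs <;> omega
    · have hBzero : B = 0 := by
        rw [hB, Finset.card_eq_zero, Finset.filter_eq_empty_iff]
        intro j _
        exact fun hjt => h3 (le_trans (bestMachine_le hm' ℓ' j) hjt)
      rw [hBzero]
      exact Nat.zero_le _

lemma schedInv_loadsAfter {m m' : ℕ} (hm : 0 < m) (hm' : 0 < m') :
    ∀ (jobs : List ℝ), (∀ s ∈ jobs, 0 ≤ s) →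
    ∀ (ℓ : Fin m → ℝ) (ℓ' : Fin m' → ℝ), SchedInv ℓ ℓ' →
    SchedInv (loadsAfter hm ℓ jobs) (loadsAfter hm' ℓ' jobs)
  | [], _, ℓ, ℓ', h => h
  | s :: rest, hnn, ℓ, ℓ', h => by
    simp only [loadsAfter]
    exact schedInv_loadsAfter hm hm' rest
      (fun x hx => hnn x (List.mem_cons_of_mem _ hx)) _ _
      (schedInv_step hm hm' ℓ ℓ' s (hnn s List.mem_cons_self) h)

/-- decreasing the number of machines weakly increases the free
time of a list schedule (zero initial loads). -/
theorem stmt3 (m m' : ℕ) (hm' : 0 < m') (hle : m' ≤ m)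
    (jobs : List ℝ) (hjobs : ∀ s ∈ jobs, 0 ≤ s) :
    freeTime (m := m) (Nat.lt_of_lt_of_le hm' hle) (fun _ => 0) jobs ≤
      freeTime (m := m') hm' (fun _ => 0) jobs := by
  have hm : 0 < m := Nat.lt_of_lt_of_le hm' hle
  have hinv0 : SchedInv (fun _ : Fin m => (0 : ℝ)) (fun _ : Fin m' => (0 : ℝ)) := by
    intro t
    by_cases ht : (0 : ℝ) ≤ t <;> simp [ht, hle]
  have hinv := schedInv_loadsAfter hm hm' jobs hjobs _ _ hinv0
  unfold freeTime
  set f := loadsAfter hm (fun _ => 0) jobs with hf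
  set g := loadsAfter hm' (fun _ => 0) jobs with hg
  obtain ⟨j, hj, hje⟩ := Finset.exists_mem_eq_inf'
    (⟨⟨0, hm'⟩, Finset.mem_univ _⟩ : Finset.univ.Nonempty) g
  rw [hje]
  have h1 : 0 < (Finset.univ.filter fun j' => g j' ≤ g j).card :=
    Finset.card_pos.mpr ⟨j, by simp⟩
  obtain ⟨i, hi⟩ := Finset.card_pos.mp (lt_of_lt_of_le h1 (hinv (g j)))
  rw [Finset.mem_filter] at hi
  exact le_trans (Finset.inf'_le _ (Finset.mem_univ i)) hi.2
end
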